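/- Let q > 3 be a prime which is neither of the form 2^n + 1 nor 2^n - 1. Then the only solutions of the S-unit equation for S = {2, q}, i.e., u ∈ ℤ[1/(2q)]^× with 1 - u ∈ ℤ[1/(2q)]^×, are u ∈ {2, -1, 1/2}. -/

import Mathlib

/-!
Writing `u = ε 2^a q^b` and `1 - u = δ 2^c q^d`, the identity `u + (1 - u) = 1` becomes, after
moving negative terms across, an equation `x + y = z` between positive `{2, q}`-units. Dividing by
the smallest powers of `2` and `q` that occur turns it into an equation of natural numbers in which
each of `2` and `q` divides at most one term, and what is left is `1 + 1 = 2` or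
`q ^ m = 2 ^ n ± 1`. For `m ≥ 2` the latter is impossible for `q > 3`: for even `m` compare
`q ^ (m / 2) ± 1` with powers of two, for odd `m` the cofactor of `q ∓ 1` in `q ^ m ∓ 1` is an odd
geometric sum dividing a power of two, hence `1`.
-/

/-- `u` is a unit of `ℤ[1/(2q)]`, i.e. of the form `± 2^a q^b` with `a b : ℤ`. -/
def IsTwoQUnit (q : ℕ) (u : ℚ) : Prop :=
  ∃ (ε : ℚ) (a b : ℤ), (ε = 1 ∨ ε = -1) ∧ u = ε * (2 : ℚ) ^ a * (q : ℚ) ^ b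

open Finset

theorem odd_geom_sum {x : ℤ} (hx : Odd x) {m : ℕ} (hm : Odd m) :
    Odd (∑ i ∈ range m, x ^ i) := by
  have h := dvd_geom_sum₂_iff_of_dvd_sub (n := m) (p := (2 : ℤ)) (y := 1)
    (by simpa [← even_iff_two_dvd] using hx.sub_odd odd_one)
  simp only [one_pow, mul_one] at h
  rw [← Int.not_even_iff_odd, even_iff_two_dvd, h, ← even_iff_two_dvd, Int.even_coe_nat]
  exact Nat.not_even_iff_odd.2 hm

theorem pow_eq_self_of_pow_sub_one_dvd_two_pow {x : ℤ} (hx : Odd x) {m n : ℕ} (hm : Odd m)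
    (h : x ^ m - 1 ∣ 2 ^ n) : x ^ m = x := by
  have hS : ∑ i ∈ range m, x ^ i = 1 := by
    have hdvd := (Dvd.intro _ (geom_sum_mul x m)).trans h
    have hodd := odd_geom_sum hx hm
    lift ∑ i ∈ range m, x ^ i to ℕ using hm.geom_sum_pos.le with s
    norm_cast at hdvd hodd ⊢
    exact (Nat.coprime_two_right.2 hodd).pow_right n |>.eq_one_of_dvd hdvd
  linear_combination (x - 1) * hS - geom_sum_mul x m

theorem le_three_of_sq_eq_two_pow_add_one {r n : ℕ} (h : r ^ 2 = 2 ^ n + 1) : r ≤ 3 := by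
  have hr : 1 ≤ r := by
    by_contra! h0
    simp [Nat.lt_one_iff.1 h0] at h
  have hfac : (r - 1) * (r + 1) = 2 ^ n := by
    zify [hr] at h ⊢
    linear_combination h
  obtain ⟨i, -, hi⟩ := (Nat.dvd_prime_pow Nat.prime_two).1 (Dvd.intro _ hfac)
  obtain ⟨j, -, hj⟩ := (Nat.dvd_prime_pow Nat.prime_two).1 (Dvd.intro_left _ hfac)
  have hij : i ≤ j := ((Nat.pow_lt_pow_iff_right (by norm_num)).1 (by omega : 2 ^ i < 2 ^ j)).le
  have : r - 1 ∣ r + 1 := hi ▸ hj ▸ Nat.pow_dvd_pow 2 hij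
  have : r - 1 ∣ 2 := by
    have := Nat.dvd_sub this (dvd_refl (r - 1))
    rwa [show r + 1 - (r - 1) = 2 by omega] at this
  have := Nat.le_of_dvd two_pos this
  omega

theorem le_one_of_sq_add_one_eq_two_pow {r n : ℕ} (h : r ^ 2 + 1 = 2 ^ n) : r ≤ 1 := by
  by_contra! hr
  have hn : 2 ≤ n := by
    by_contra! hn
    interval_cases n <;> nlinarith
  have h4 : 4 ∣ r ^ 2 + 1 := h ▸ (Nat.pow_dvd_pow 2 hn)
  have : r ^ 2 % 4 = (r % 4) ^ 2 % 4 := Nat.pow_mod r 2 4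
  have : r % 4 < 4 := Nat.mod_lt r (by norm_num)
  interval_cases hr4 : r % 4 <;> omega

theorem pow_ne_two_pow_add_one_of_two_le {q m n : ℕ} (hq : Odd q) (hq3 : 3 < q) (hm : 2 ≤ m) :
    q ^ m ≠ 2 ^ n + 1 := by
  intro h
  rcases Nat.even_or_odd m with ⟨k, rfl⟩ | hmo
  · have : q ≤ q ^ k := Nat.le_self_pow (by omega) q
    have := le_three_of_sq_eq_two_pow_add_one (r := q ^ k) (by rw [← h]; ring)
    omega
  · have hdvd : (q : ℤ) ^ m - 1 ∣ 2 ^ n :=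
      (eq_sub_of_add_eq (by exact_mod_cast h.symm : (2 : ℤ) ^ n + 1 = q ^ m)).symm.dvd
    have := pow_eq_self_of_pow_sub_one_dvd_two_pow (by exact_mod_cast hq) hmo hdvd
    have := (Nat.pow_eq_self_iff (a := q) (by omega)).1 (by exact_mod_cast this)
    omega

theorem pow_add_one_ne_two_pow_of_two_le {q m n : ℕ} (hq : Odd q) (hq1 : 1 < q) (hm : 2 ≤ m) :
    q ^ m + 1 ≠ 2 ^ n := by
  intro h
  rcases Nat.even_or_odd m with ⟨k, rfl⟩ | hmo
  · have : q ≤ q ^ k := Nat.le_self_pow (by omega) q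
    have := le_one_of_sq_add_one_eq_two_pow (r := q ^ k) (by rw [← h]; ring)
    omega
  · have hdvd : (-q : ℤ) ^ m - 1 ∣ 2 ^ n := by
      rw [hmo.neg_pow, ← neg_add', neg_dvd]
      exact_mod_cast h.dvd
    have := pow_eq_self_of_pow_sub_one_dvd_two_pow (by simpa using hq) hmo hdvd
    rw [hmo.neg_pow, neg_inj] at this
    have := (Nat.pow_eq_self_iff hq1).1 (by exact_mod_cast this)
    omega

theorem two_dvd_two_pow_mul_pow_iff {q : ℕ} (hq : Odd q) (A B : ℕ) :
    2 ∣ 2 ^ A * q ^ B ↔ A ≠ 0 := by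
  rw [((Nat.coprime_two_left.2 hq).pow_right B).dvd_mul_right, dvd_pow_self_iff]
  simp

theorem dvd_two_pow_mul_pow_iff {q : ℕ} (hq : Odd q) (hq1 : q ≠ 1) (A B : ℕ) :
    q ∣ 2 ^ A * q ^ B ↔ B ≠ 0 := by
  rw [((Nat.coprime_two_right.2 hq).pow_right A).dvd_mul_left, dvd_pow_self_iff]
  simp [hq1]

theorem not_dvd_pair_of_add_eq {p X Y Z : ℕ} (h : X + Y = Z)
    (h0 : ¬p ∣ X ∨ ¬p ∣ Y ∨ ¬p ∣ Z) :
    (¬p ∣ X ∧ ¬p ∣ Y) ∨ (¬p ∣ X ∧ ¬p ∣ Z) ∨ (¬p ∣ Y ∧ ¬p ∣ Z) := by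
  subst h
  by_cases hX : p ∣ X <;> by_cases hY : p ∣ Y <;>
    simp_all [Nat.dvd_add_right, Nat.dvd_add_left]

theorem Int.exists_common_base_add_natCast (a c e : ℤ) :
    ∃ m : ℤ, ∃ A C E : ℕ, a = m + A ∧ c = m + C ∧ e = m + E ∧ (A = 0 ∨ C = 0 ∨ E = 0) :=
  ⟨min (min a c) e, (a - min (min a c) e).toNat, (c - min (min a c) e).toNat,
    (e - min (min a c) e).toNat, by omega, by omega, by omega, by omega⟩

theorem two_zpow_add_natCast_mul_zpow_add_natCast {q : ℕ} (hq : q ≠ 0) (m n : ℤ) (A B : ℕ) :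
    (2 : ℚ) ^ (m + A) * (q : ℚ) ^ (n + B) = 2 ^ m * q ^ n * ((2 ^ A * q ^ B : ℕ) : ℚ) := by
  rw [zpow_add₀ two_ne_zero, zpow_add₀ (by exact_mod_cast hq), zpow_natCast, zpow_natCast]
  push_cast
  ring

theorem pow_ne_two_pow_add_one {q : ℕ} (hq : Odd q) (hq3 : 3 < q)
    (hF : ∀ n, q ≠ 2 ^ n + 1) (m n : ℕ) : q ^ m ≠ 2 ^ n + 1 :=
  match m with
  | 0 => by simp
  | 1 => by simpa using hF n
  | _ + 2 => pow_ne_two_pow_add_one_of_two_le hq hq3 (by omega)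

theorem eq_zero_of_pow_add_one_eq_two_pow {q m n : ℕ} (hq : Odd q) (hq1 : 1 < q)
    (hM : ∀ n, q + 1 ≠ 2 ^ n) (h : q ^ m + 1 = 2 ^ n) : m = 0 :=
  match m with
  | 0 => rfl
  | 1 => absurd (by simpa using h) (hM n)
  | _ + 2 => absurd h (pow_add_one_ne_two_pow_of_two_le hq hq1 (by omega))

theorem eq_of_two_pow_mul_pow_add_eq {q A B C D E F : ℕ} (hq : Odd q) (hq3 : 3 < q)
    (hF : ∀ n, q ≠ 2 ^ n + 1) (hM : ∀ n, q + 1 ≠ 2 ^ n)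
    (h : 2 ^ A * q ^ B + 2 ^ C * q ^ D = 2 ^ E * q ^ F)
    (hmin₂ : A = 0 ∨ C = 0 ∨ E = 0) (hminq : B = 0 ∨ D = 0 ∨ F = 0) : A = C ∧ B = D := by
  have hq0 : 0 < q := by omega
  have hpair₂ : (A = 0 ∧ C = 0) ∨ (A = 0 ∧ E = 0) ∨ (C = 0 ∧ E = 0) := by
    simpa [two_dvd_two_pow_mul_pow_iff hq] using
      not_dvd_pair_of_add_eq (p := 2) h (by simpa [two_dvd_two_pow_mul_pow_iff hq] using hmin₂)
  have hpairq : (B = 0 ∧ D = 0) ∨ (B = 0 ∧ F = 0) ∨ (D = 0 ∧ F = 0) := by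
    simpa [dvd_two_pow_mul_pow_iff hq (by omega : q ≠ 1)] using
      not_dvd_pair_of_add_eq (p := q) h
        (by simpa [dvd_two_pow_mul_pow_iff hq (by omega : q ≠ 1)] using hminq)
  -- Nine shapes remain: `1 + 1 = 2 ^ E * q ^ F`, `q ^ m + 1 = 2 ^ n` and `2 ^ n + 1 = q ^ m`
  -- (each twice), and four sums of positive terms equal to `1`.
  rcases hpair₂ with ⟨rfl, rfl⟩ | ⟨rfl, rfl⟩ | ⟨rfl, rfl⟩ <;>
    rcases hpairq with ⟨rfl, rfl⟩ | ⟨rfl, rfl⟩ | ⟨rfl, rfl⟩ <;>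
    simp only [pow_zero, one_mul, mul_one] at h
  · exact ⟨rfl, rfl⟩
  · exact ⟨rfl, (eq_zero_of_pow_add_one_eq_two_pow hq (by omega) hM (n := E) (by omega)).symm⟩
  · exact ⟨rfl, eq_zero_of_pow_add_one_eq_two_pow hq (by omega) hM h⟩
  · exact absurd (by omega) (pow_ne_two_pow_add_one hq hq3 hF F C)
  · simp [hq0.ne'] at h
  · have := pow_pos hq0 B
    have := Nat.one_le_two_pow (n := C)
    omega
  · exact absurd h.symm (pow_ne_two_pow_add_one hq hq3 hF F A)
  · have := pow_pos hq0 D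
    have := Nat.one_le_two_pow (n := A)
    omega
  · simp [hq0.ne'] at h

theorem eq_of_two_zpow_mul_zpow_add_eq {q : ℕ} (hq : Odd q) (hq3 : 3 < q)
    (hF : ∀ n, q ≠ 2 ^ n + 1) (hM : ∀ n, q + 1 ≠ 2 ^ n) {a b c d e f : ℤ}
    (h : (2 : ℚ) ^ a * (q : ℚ) ^ b + 2 ^ c * q ^ d = 2 ^ e * q ^ f) : a = c ∧ b = d := by
  obtain ⟨m, A, C, E, rfl, rfl, rfl, hmin₂⟩ := Int.exists_common_base_add_natCast a c e
  obtain ⟨n, B, D, F, rfl, rfl, rfl, hminq⟩ := Int.exists_common_base_add_natCast b d f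
  have hq0 : q ≠ 0 := by omega
  simp only [two_zpow_add_natCast_mul_zpow_add_natCast hq0] at h
  rw [← mul_add, mul_right_inj' (by positivity)] at h
  obtain ⟨rfl, rfl⟩ := eq_of_two_pow_mul_pow_add_eq hq hq3 hF hM (by exact_mod_cast h) hmin₂ hminq
  exact ⟨rfl, rfl⟩

theorem eq_two_or_neg_one_or_half_of_isTwoQUnit {q : ℕ} (hq : Odd q) (hq3 : 3 < q)
    (hF : ∀ n, q ≠ 2 ^ n + 1) (hM : ∀ n, q + 1 ≠ 2 ^ n) {u : ℚ}
    (hu : IsTwoQUnit q u) (hv : IsTwoQUnit q (1 - u)) : u = 2 ∨ u = -1 ∨ u = 1 / 2 := by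
  obtain ⟨ε, a, b, hε, rfl⟩ := hu
  obtain ⟨δ, c, d, hδ, hv⟩ := hv
  have key := @eq_of_two_zpow_mul_zpow_add_eq q hq hq3 hF hM
  rcases hε with rfl | rfl <;> rcases hδ with rfl | rfl
  · obtain ⟨rfl, rfl⟩ := key (a := a) (b := b) (c := c) (d := d) (e := 0) (f := 0)
      (by simp only [zpow_zero]; linear_combination -hv)
    right; right
    linear_combination -hv / 2
  · obtain ⟨rfl, rfl⟩ := key (a := 0) (b := 0) (c := c) (d := d) (e := a) (f := b)
      (by simp only [zpow_zero]; linear_combination hv)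
    left
    simp only [zpow_zero] at hv
    linear_combination -hv
  · obtain ⟨rfl, rfl⟩ := key (a := 0) (b := 0) (c := a) (d := b) (e := c) (f := d)
      (by simp only [zpow_zero]; linear_combination hv)
    right; left
    norm_num
  · have : (0 : ℚ) < 2 ^ a * q ^ b + 2 ^ c * q ^ d := by positivity
    linarith

theorem S_unit_solutions_two_q_generic (q : ℕ) (hq : q.Prime) (hq3 : 3 < q)
    (hFermat : ∀ n : ℕ, q ≠ 2 ^ n + 1) (hMersenne : ∀ n : ℕ, (q : ℤ) ≠ 2 ^ n - 1)
    (u : ℚ) :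
    (IsTwoQUnit q u ∧ IsTwoQUnit q (1 - u)) ↔ (u = 2 ∨ u = -1 ∨ u = 1/2) := by
  have hodd : Odd q := hq.odd_of_ne_two (by omega)
  have hM : ∀ n, q + 1 ≠ 2 ^ n := fun n h => hMersenne n (eq_sub_of_add_eq (by exact_mod_cast h))
  constructor
  · rintro ⟨hu, hv⟩
    exact eq_two_or_neg_one_or_half_of_isTwoQUnit hodd hq3 hFermat hM hu hv
  · rintro (rfl | rfl | rfl)
    · exact ⟨⟨1, 1, 0, .inl rfl, by norm_num⟩, ⟨-1, 0, 0, .inr rfl, by norm_num⟩⟩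
    · exact ⟨⟨-1, 0, 0, .inr rfl, by norm_num⟩, ⟨1, 1, 0, .inl rfl, by norm_num⟩⟩
    · exact ⟨⟨1, -1, 0, .inl rfl, by norm_num⟩, ⟨1, -1, 0, .inl rfl, by norm_num⟩⟩
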